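/- arXiv:2309.09149 — 2 statements merged into one kernel-verified Lean document; each statement's English description precedes it below -/
import Mathlib

section
/- Let m₁, m₂, m₃ be pairwise coprime positive integers and set a = m₂m₃, b = m₁m₃, c = m₁m₂. Then for every n ≥ 0, g(a, b, c; t_n) = m₁m₂m₃(n+2) − m₁m₂ − m₁m₃ − m₂m₃, where t_n = n(n+1)/2 is the n-th triangular number. -/
def pairTripleEquiv (M : ℕ) :
    {p : ℕ × ℕ × ℕ // p.1 + p.2.1 + p.2.2 = M} ≃ Σ x : Fin (M+1), Fin (M - x.1 + 1) where
  toFun p := ⟨⟨p.1.1, by have := p.2; omega⟩, ⟨p.1.2.1, by have := p.2; dsimp only [Fin.val_mk]; omega⟩⟩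
  invFun s := ⟨(s.1.1, s.2.1, M - s.1.1 - s.2.1), by have := s.1.2; have := s.2.2; dsimp only; omega⟩
  left_inv := by
    rintro ⟨⟨a, b, c⟩, h⟩
    apply Subtype.ext
    dsimp only
    simp only [Prod.mk.injEq]
    dsimp only at h
    exact ⟨trivial, trivial, by omega⟩
  right_inv := fun ⟨⟨a, ha⟩, ⟨b, hb⟩⟩ => by
    have hb' : b < M - a + 1 := hb
    apply Sigma.ext
    · rfl
    · dsimp only [Fin.val_mk]
      exact heq_of_eq rfl

lemma gauss (K : ℕ) : 2 * ∑ x ∈ Finset.range K, (x+1) = K * (K+1) := by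
  induction K with
  | zero => rfl
  | succ k ih =>
    rw [Finset.sum_range_succ, Nat.mul_add, ih]; ring

lemma triple_card (M : ℕ) :
    Nat.card {p : ℕ × ℕ × ℕ // p.1 + p.2.1 + p.2.2 = M} = (M+1)*(M+2)/2 := by
  rw [Nat.card_congr (pairTripleEquiv M), Nat.card_eq_fintype_card, Fintype.card_sigma]
  simp only [Fintype.card_fin]
  rw [Fin.sum_univ_eq_sum_range (fun i => M - i + 1) (M + 1)]
  have h1 : ∑ x ∈ Finset.range (M+1), (M - x + 1) = ∑ x ∈ Finset.range (M+1), (x+1) := by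
    rw [← Finset.sum_range_reflect]
    exact Finset.sum_congr rfl fun x hx => by simp at hx; omega
  have h2 := gauss (M+1)
  have h3 : (M+1)*(M+2) = (M+1)*((M+1)+1) := by ring
  omega

lemma tri_lt (n : ℕ) : n*(n+1)/2 < (n+1)*(n+2)/2 := by
  have e1 : n*(n+1) % 2 = 0 := Nat.even_iff.mp (Nat.even_mul_succ_self n)
  have e2 : (n+1)*(n+2) % 2 = 0 := Nat.even_iff.mp (Nat.even_mul_succ_self (n+1))
  have e3 : (n+1)*(n+2) = n*(n+1) + 2*(n+1) := by ring
  omega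

lemma tri_mono {k l : ℕ} (h : k ≤ l) : (k+1)*(k+2)/2 ≤ (l+1)*(l+2)/2 :=
  Nat.div_le_div_right (Nat.mul_le_mul (by omega) (by omega))

lemma int_coprime_of_nat {p q : ℕ} (h : Nat.Coprime p q) : IsCoprime (p:ℤ) (q:ℤ) := by
  rw [Int.isCoprime_iff_gcd_eq_one]
  simpa [Int.gcd_natCast_natCast] using h

lemma residue_exists {m₁ : ℕ} (h₁ : 0 < m₁) {a : ℕ} (hco : Nat.Coprime a m₁) (N : ℤ) :
    ∃ x₀ : ℕ, x₀ < m₁ ∧ (m₁:ℤ) ∣ N - a * x₀ := by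
  haveI : NeZero m₁ := ⟨h₁.ne'⟩
  refine ⟨((N : ZMod m₁) * ((a : ZMod m₁))⁻¹).val, ZMod.val_lt _, ?_⟩
  have hu : IsUnit ((a : ZMod m₁)) := (ZMod.isUnit_iff_coprime a m₁).mpr hco
  rw [← ZMod.intCast_zmod_eq_zero_iff_dvd]
  push_cast
  rw [ZMod.natCast_val, ZMod.cast_id]
  have h2 : (a : ZMod m₁) * ((N : ZMod m₁) * (a : ZMod m₁)⁻¹) = (N : ZMod m₁) := by
    rw [mul_comm ((N : ZMod m₁)) _, ← mul_assoc, ZMod.mul_inv_of_unit _ hu, one_mul]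
  rw [h2, sub_self]

lemma triple_pred_finite (P : ℕ × ℕ × ℕ → Prop) (B : ℕ)
    (hb : ∀ p, P p → p.1 ≤ B ∧ p.2.1 ≤ B ∧ p.2.2 ≤ B) : Finite {p // P p} := by
  apply Finite.of_injective (β := Fin (B+1) × Fin (B+1) × Fin (B+1))
    (fun p => (⟨p.1.1, by have := hb p.1 p.2; omega⟩, ⟨p.1.2.1, by have := hb p.1 p.2; omega⟩,
      ⟨p.1.2.2, by have := hb p.1 p.2; omega⟩))
  rintro ⟨⟨x, y, z⟩, hp⟩ ⟨⟨x', y', z'⟩, hq⟩ h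
  simp only [Prod.mk.injEq, Fin.mk.injEq] at h
  exact Subtype.ext (by simp_all)
lemma sol_struct (m₁ m₂ m₃ : ℕ) (h₁ : 0 < m₁) (h₂ : 0 < m₂) (h₃ : 0 < m₃)
    (h₁₂ : Nat.Coprime m₁ m₂) (h₁₃ : Nat.Coprime m₁ m₃) (h₂₃ : Nat.Coprime m₂ m₃)
    (n : ℕ) (x y z : ℕ)
    (h : ((m₂*m₃ : ℕ):ℤ) * x + ((m₁*m₃:ℕ):ℤ) * y + ((m₁*m₂:ℕ):ℤ) * z
        = (m₁:ℤ)*m₂*m₃*((n:ℤ)+2) - (m₁:ℤ)*m₂ - (m₁:ℤ)*m₃ - (m₂:ℤ)*m₃) :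
    ∃ s t w : ℕ, x + 1 = m₁ * s ∧ y + 1 = m₂ * t ∧ z + 1 = m₃ * w ∧
      1 ≤ s ∧ 1 ≤ t ∧ 1 ≤ w ∧ s + t + w = n + 2 := by
  push_cast at h
  have hdx : (m₁:ℤ) ∣ ((m₂:ℤ)*m₃) * ((x:ℤ)+1) :=
    ⟨(m₂:ℤ)*m₃*((n:ℤ)+2) - (m₃:ℤ)*y - (m₂:ℤ)*z - m₃ - m₂, by linear_combination h⟩
  have hdy : (m₂:ℤ) ∣ ((m₁:ℤ)*m₃) * ((y:ℤ)+1) :=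
    ⟨(m₁:ℤ)*m₃*((n:ℤ)+2) - (m₃:ℤ)*x - (m₁:ℤ)*z - m₃ - m₁, by linear_combination h⟩
  have hdz : (m₃:ℤ) ∣ ((m₁:ℤ)*m₂) * ((z:ℤ)+1) :=
    ⟨(m₁:ℤ)*m₂*((n:ℤ)+2) - (m₂:ℤ)*x - (m₁:ℤ)*y - m₂ - m₁, by linear_combination h⟩
  have cx : IsCoprime (m₁:ℤ) ((m₂:ℤ)*m₃) := by
    have := int_coprime_of_nat (Nat.Coprime.mul_right h₁₂ h₁₃)
    push_cast at this; exact this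
  have cy : IsCoprime (m₂:ℤ) ((m₁:ℤ)*m₃) := by
    have := int_coprime_of_nat (Nat.Coprime.mul_right h₁₂.symm h₂₃)
    push_cast at this; exact this
  have cz : IsCoprime (m₃:ℤ) ((m₁:ℤ)*m₂) := by
    have := int_coprime_of_nat (Nat.Coprime.mul_right h₁₃.symm h₂₃.symm)
    push_cast at this; exact this
  have dx : m₁ ∣ x + 1 := by
    have := cx.dvd_of_dvd_mul_left hdx
    exact_mod_cast this
  have dy : m₂ ∣ y + 1 := by
    have := cy.dvd_of_dvd_mul_left hdy
    exact_mod_cast this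
  have dz : m₃ ∣ z + 1 := by
    have := cz.dvd_of_dvd_mul_left hdz
    exact_mod_cast this
  obtain ⟨s, hs⟩ := dx
  obtain ⟨t, ht⟩ := dy
  obtain ⟨w, hw⟩ := dz
  have hs1 : 1 ≤ s := Nat.pos_of_ne_zero (fun h0 => by subst h0; omega)
  have ht1 : 1 ≤ t := Nat.pos_of_ne_zero (fun h0 => by subst h0; omega)
  have hw1 : 1 ≤ w := Nat.pos_of_ne_zero (fun h0 => by subst h0; omega)
  refine ⟨s, t, w, hs, ht, hw, hs1, ht1, hw1, ?_⟩
  have hx' : (x:ℤ) + 1 = (m₁:ℤ) * s := by exact_mod_cast congrArg (Nat.cast : ℕ → ℤ) hs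
  have hy' : (y:ℤ) + 1 = (m₂:ℤ) * t := by exact_mod_cast congrArg (Nat.cast : ℕ → ℤ) ht
  have hz' : (z:ℤ) + 1 = (m₃:ℤ) * w := by exact_mod_cast congrArg (Nat.cast : ℕ → ℤ) hw
  have hsum : ((m₁:ℤ)*m₂*m₃) * ((s:ℤ)+t+w) = ((m₁:ℤ)*m₂*m₃) * ((n:ℤ)+2) := by
    linear_combination h - ((m₂:ℤ)*m₃)*hx' - ((m₁:ℤ)*m₃)*hy' - ((m₁:ℤ)*m₂)*hz'
  have hm0 : ((m₁:ℤ)*m₂*m₃) ≠ 0 := by positivity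
  have := mul_left_cancel₀ hm0 hsum
  exact_mod_cast this

lemma sol_bound {a b c : ℕ} (ha : 0 < a) (hb : 0 < b) (hc : 0 < c) {N : ℤ} {x y z : ℕ}
    (h : ((a:ℕ):ℤ)*x + (b:ℤ)*y + (c:ℤ)*z = N) :
    x ≤ N.toNat ∧ y ≤ N.toNat ∧ z ≤ N.toNat := by
  have ha' : (1:ℤ) ≤ a := by exact_mod_cast ha
  have hb' : (1:ℤ) ≤ b := by exact_mod_cast hb
  have hc' : (1:ℤ) ≤ c := by exact_mod_cast hc
  have px : (0:ℤ) ≤ (x:ℤ) := Int.natCast_nonneg x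
  have py : (0:ℤ) ≤ (y:ℤ) := Int.natCast_nonneg y
  have pz : (0:ℤ) ≤ (z:ℤ) := Int.natCast_nonneg z
  have hx : (x:ℤ) ≤ N := by nlinarith
  have hy : (y:ℤ) ≤ N := by nlinarith
  have hz : (z:ℤ) ≤ N := by nlinarith
  omega


/-- `d3 a b c n` is the number of triples `(x,y,z)` of non-negative integers
with `a*x + b*y + c*z = n`. -/
noncomputable def d3 (a b c : ℕ) (n : ℤ) : ℕ :=
  Nat.card {p : ℕ × ℕ × ℕ // (a : ℤ) * p.1 + (b : ℤ) * p.2.1 + (c : ℤ) * p.2.2 = n}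


/-- Beck–Kifer: for pairwise coprime `m₁, m₂, m₃` and `a = m₂m₃`, `b = m₁m₃`,
`c = m₁m₂`, we have `g(a,b,c; t_n) = m₁m₂m₃(n+2) - m₁m₂ - m₁m₃ - m₂m₃`,
where `t_n = n(n+1)/2`. -/
theorem stmt17 (m₁ m₂ m₃ : ℕ) (h₁ : 0 < m₁) (h₂ : 0 < m₂) (h₃ : 0 < m₃)
    (h₁₂ : Nat.Coprime m₁ m₂) (h₁₃ : Nat.Coprime m₁ m₃) (h₂₃ : Nat.Coprime m₂ m₃)
    (n : ℕ) :
    IsGreatest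
      {N : ℤ | d3 (m₂ * m₃) (m₁ * m₃) (m₁ * m₂) N ≤ n * (n + 1) / 2}
      ((m₁ : ℤ) * m₂ * m₃ * ((n : ℤ) + 2) - m₁ * m₂ - m₁ * m₃ - m₂ * m₃) := by
  set F : ℤ := (m₁ : ℤ) * m₂ * m₃ * ((n : ℤ) + 2) - m₁ * m₂ - m₁ * m₃ - m₂ * m₃ with hF
  constructor
  · -- membership : d3 F ≤ n(n+1)/2
    show d3 (m₂ * m₃) (m₁ * m₃) (m₁ * m₂) F ≤ n * (n + 1) / 2
    haveI hTfin : Finite {p : ℕ × ℕ × ℕ // p.1 + p.2.1 + p.2.2 + 3 = n + 2} :=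
      triple_pred_finite _ (n + 2) (fun p hp => by omega)
    have hcard : Nat.card {p : ℕ × ℕ × ℕ // p.1 + p.2.1 + p.2.2 + 3 = n + 2} ≤ n * (n + 1) / 2 := by
      cases n with
      | zero =>
        haveI : IsEmpty {p : ℕ × ℕ × ℕ // p.1 + p.2.1 + p.2.2 + 3 = 0 + 2} :=
          ⟨fun p => by have := p.2; omega⟩
        simp [Nat.card_of_isEmpty]
      | succ k =>
        rw [Nat.card_congr (Equiv.subtypeEquivRight
          (q := fun p : ℕ × ℕ × ℕ => p.1 + p.2.1 + p.2.2 = k) (fun p => by omega)), triple_card]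
    have key : ∀ q : ℕ × ℕ × ℕ,
        (((m₂*m₃ : ℕ):ℤ) * q.1 + ((m₁*m₃ : ℕ):ℤ) * q.2.1 + ((m₁*m₂ : ℕ):ℤ) * q.2.2 = F) →
        ((q.1 + 1) / m₁ - 1) + ((q.2.1 + 1) / m₂ - 1) + ((q.2.2 + 1) / m₃ - 1) + 3 = n + 2 := by
      rintro ⟨x, y, z⟩ hq
      obtain ⟨s, t, w, hx, hy, hz, hs1, ht1, hw1, hsum⟩ :=
        sol_struct m₁ m₂ m₃ h₁ h₂ h₃ h₁₂ h₁₃ h₂₃ n x y z hq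
      have ex : (x + 1) / m₁ = s := by rw [hx, Nat.mul_div_cancel_left _ h₁]
      have ey : (y + 1) / m₂ = t := by rw [hy, Nat.mul_div_cancel_left _ h₂]
      have ez : (z + 1) / m₃ = w := by rw [hz, Nat.mul_div_cancel_left _ h₃]
      simp only at ex ey ez ⊢
      rw [ex, ey, ez]
      omega
    refine le_trans (Nat.card_le_card_of_injective
      (fun p => ⟨((p.1.1 + 1) / m₁ - 1, (p.1.2.1 + 1) / m₂ - 1, (p.1.2.2 + 1) / m₃ - 1),
        key p.1 p.2⟩)
      ?_) hcard
    · rintro ⟨⟨x, y, z⟩, hp⟩ ⟨⟨x', y', z'⟩, hq⟩ hpq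
      simp only [Subtype.mk.injEq, Prod.mk.injEq] at hpq
      obtain ⟨s, t, w, hx, hy, hz, hs1, ht1, hw1, hsum⟩ :=
        sol_struct m₁ m₂ m₃ h₁ h₂ h₃ h₁₂ h₁₃ h₂₃ n x y z hp
      obtain ⟨s', t', w', hx', hy', hz', hs1', ht1', hw1', hsum'⟩ :=
        sol_struct m₁ m₂ m₃ h₁ h₂ h₃ h₁₂ h₁₃ h₂₃ n x' y' z' hq
      have ex : (x + 1) / m₁ = s := by rw [hx, Nat.mul_div_cancel_left _ h₁]
      have ey : (y + 1) / m₂ = t := by rw [hy, Nat.mul_div_cancel_left _ h₂]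
      have ez : (z + 1) / m₃ = w := by rw [hz, Nat.mul_div_cancel_left _ h₃]
      have ex' : (x' + 1) / m₁ = s' := by rw [hx', Nat.mul_div_cancel_left _ h₁]
      have ey' : (y' + 1) / m₂ = t' := by rw [hy', Nat.mul_div_cancel_left _ h₂]
      have ez' : (z' + 1) / m₃ = w' := by rw [hz', Nat.mul_div_cancel_left _ h₃]
      rw [ex, ey, ez, ex', ey', ez'] at hpq
      have es : s = s' := by omega
      have et : t = t' := by omega
      have ew : w = w' := by omega
      subst es; subst et; subst ew
      exact Subtype.ext (by simp only [Prod.mk.injEq]; omega)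
  · -- upper bound
    rintro N hN
    have hN' : Nat.card {p : ℕ × ℕ × ℕ //
        ((m₂*m₃ : ℕ):ℤ) * p.1 + ((m₁*m₃ : ℕ):ℤ) * p.2.1 + ((m₁*m₂ : ℕ):ℤ) * p.2.2 = N}
        ≤ n * (n + 1) / 2 := hN
    by_contra hgt
    push_neg at hgt
    -- residues
    obtain ⟨x₀, hx₀, hd₁⟩ := residue_exists h₁ (Nat.Coprime.mul h₁₂.symm h₁₃.symm) N
    obtain ⟨y₀, hy₀, hd₂⟩ := residue_exists h₂ (Nat.Coprime.mul h₁₂ h₂₃.symm) N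
    obtain ⟨z₀, hz₀, hd₃⟩ := residue_exists h₃ (Nat.Coprime.mul h₁₃ h₂₃) N
    set r : ℤ := (m₂:ℤ)*m₃*x₀ + (m₁:ℤ)*m₃*y₀ + (m₁:ℤ)*m₂*z₀ with hr
    have d1 : (m₁:ℤ) ∣ N - r := by
      have h5 : N - r = (N - ((m₂*m₃ : ℕ):ℤ) * x₀) - (m₁:ℤ)*((m₃:ℤ)*y₀ + (m₂:ℤ)*z₀) := by
        push_cast; ring
      rw [h5]
      exact dvd_sub hd₁ (Dvd.intro _ rfl)
    have d2 : (m₂:ℤ) ∣ N - r := by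
      have h5 : N - r = (N - ((m₁*m₃ : ℕ):ℤ) * y₀) - (m₂:ℤ)*((m₃:ℤ)*x₀ + (m₁:ℤ)*z₀) := by
        push_cast; ring
      rw [h5]
      exact dvd_sub hd₂ (Dvd.intro _ rfl)
    have d3' : (m₃:ℤ) ∣ N - r := by
      have h5 : N - r = (N - ((m₁*m₂ : ℕ):ℤ) * z₀) - (m₃:ℤ)*((m₂:ℤ)*x₀ + (m₁:ℤ)*y₀) := by
        push_cast; ring
      rw [h5]
      exact dvd_sub hd₃ (Dvd.intro _ rfl)
    have c12 : IsCoprime (m₁:ℤ) (m₂:ℤ) := int_coprime_of_nat h₁₂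
    have c123 : IsCoprime ((m₁:ℤ)*m₂) (m₃:ℤ) := by
      have := int_coprime_of_nat (Nat.Coprime.mul h₁₃ h₂₃)
      push_cast at this; exact this
    obtain ⟨M, hM⟩ := c123.mul_dvd (c12.mul_dvd d1 d2) d3'
    have hm0 : (0:ℤ) < (m₁:ℤ)*m₂*m₃ := by positivity
    have hrmax : r ≤ 3*((m₁:ℤ)*m₂*m₃) - (m₁:ℤ)*m₂ - (m₁:ℤ)*m₃ - (m₂:ℤ)*m₃ := by
      have b1 : (m₂:ℤ)*m₃*x₀ ≤ (m₂:ℤ)*m₃*((m₁:ℤ)-1) :=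
        mul_le_mul_of_nonneg_left (by omega) (by positivity)
      have b2 : (m₁:ℤ)*m₃*y₀ ≤ (m₁:ℤ)*m₃*((m₂:ℤ)-1) :=
        mul_le_mul_of_nonneg_left (by omega) (by positivity)
      have b3 : (m₁:ℤ)*m₂*z₀ ≤ (m₁:ℤ)*m₂*((m₃:ℤ)-1) :=
        mul_le_mul_of_nonneg_left (by omega) (by positivity)
      have e0 : (m₂:ℤ)*m₃*((m₁:ℤ)-1) + (m₁:ℤ)*m₃*((m₂:ℤ)-1) + (m₁:ℤ)*m₂*((m₃:ℤ)-1)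
          = 3*((m₁:ℤ)*m₂*m₃) - (m₁:ℤ)*m₂ - (m₁:ℤ)*m₃ - (m₂:ℤ)*m₃ := by ring
      linarith
    have hMn : (n:ℤ) ≤ M := by
      have e0 : ((m₁:ℤ)*m₂*m₃)*((n:ℤ)-1) = (m₁:ℤ)*m₂*m₃*((n:ℤ)+2) - 3*((m₁:ℤ)*m₂*m₃) := by ring
      have h5 : ((m₁:ℤ)*m₂*m₃)*((n:ℤ)-1) < ((m₁:ℤ)*m₂*m₃)*M := by
        rw [← hM]
        rw [hF] at hgt
        linarith
      have := lt_of_mul_lt_mul_left h5 (le_of_lt hm0)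
      omega
    set K := M.toNat with hKdef
    have hK : (K:ℤ) = M := Int.toNat_of_nonneg (by omega)
    have hnK : n ≤ K := by omega
    haveI : Finite {p : ℕ × ℕ × ℕ //
        ((m₂*m₃ : ℕ):ℤ) * p.1 + ((m₁*m₃ : ℕ):ℤ) * p.2.1 + ((m₁*m₂ : ℕ):ℤ) * p.2.2 = N} :=
      triple_pred_finite _ N.toNat (fun p hp =>
        sol_bound (Nat.mul_pos h₂ h₃) (Nat.mul_pos h₁ h₃) (Nat.mul_pos h₁ h₂) hp)
    have key2 : ∀ q : ℕ × ℕ × ℕ, (q.1 + q.2.1 + q.2.2 = K) →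
        ((m₂*m₃ : ℕ):ℤ) * (x₀ + m₁ * q.1) + ((m₁*m₃ : ℕ):ℤ) * (y₀ + m₂ * q.2.1)
          + ((m₁*m₂ : ℕ):ℤ) * (z₀ + m₃ * q.2.2) = N := by
      rintro ⟨u, v, w⟩ hq
      have hp' : ((u:ℤ) + v + w = (K:ℤ)) := by exact_mod_cast hq
      push_cast
      linear_combination (-1) * hM + ((m₁:ℤ)*m₂*m₃) * hp' + ((m₁:ℤ)*m₂*m₃) * hK
    have hle : Nat.card {p : ℕ × ℕ × ℕ // p.1 + p.2.1 + p.2.2 = K} ≤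
        Nat.card {p : ℕ × ℕ × ℕ //
          ((m₂*m₃ : ℕ):ℤ) * p.1 + ((m₁*m₃ : ℕ):ℤ) * p.2.1 + ((m₁*m₂ : ℕ):ℤ) * p.2.2 = N} := by
      apply Nat.card_le_card_of_injective
        (fun p => ⟨(x₀ + m₁ * p.1.1, y₀ + m₂ * p.1.2.1, z₀ + m₃ * p.1.2.2), key2 p.1 p.2⟩)
      · rintro ⟨⟨u, v, w⟩, hp⟩ ⟨⟨u', v', w'⟩, hq⟩ hpq
        simp only [Subtype.mk.injEq, Prod.mk.injEq] at hpq
        have e1 : u = u' := Nat.eq_of_mul_eq_mul_left h₁ (by omega)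
        have e2 : v = v' := Nat.eq_of_mul_eq_mul_left h₂ (by omega)
        have e3 : w = w' := Nat.eq_of_mul_eq_mul_left h₃ (by omega)
        exact Subtype.ext (by simp [e1, e2, e3])
    rw [triple_card K] at hle
    have h6 : (n+1)*(n+2)/2 ≤ (K+1)*(K+2)/2 := tri_mono hnK
    have h7 := tri_lt n
    omega
end

section
/- Let a, b be positive integers and s ≥ 0. Then g(1, a, b; Σ_{j=0}^{s} ⌈jb/a⌉) = sb − 1; i.e., sb − 1 is the largest integer having at most Σ_{j=0}^{s} ⌈jb/a⌉ representations as x + ay + bz with x,y,z non-negative integers, and every integer greater than sb − 1 has strictly more such representations. -/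
open Finset


namespace Stmt18Aux

/-- Pairs `(y,z)` with `a*y + b*z ≤ n`. -/
def T (a b n : ℕ) : Finset (ℕ × ℕ) :=
  (Finset.range (n+1) ×ˢ Finset.range (n+1)).filter (fun p => a * p.1 + b * p.2 ≤ n)

lemma mem_T {a b : ℕ} (ha : 0 < a) (hb : 0 < b) {n : ℕ} {p : ℕ × ℕ} :
    p ∈ T a b n ↔ a * p.1 + b * p.2 ≤ n := by
  constructor
  · intro h; exact (Finset.mem_filter.mp h).2
  · intro h
    refine Finset.mem_filter.mpr ⟨Finset.mem_product.mpr ⟨Finset.mem_range.mpr ?_,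
      Finset.mem_range.mpr ?_⟩, h⟩
    · have h1 : p.1 ≤ a * p.1 := Nat.le_mul_of_pos_left _ ha
      omega
    · have h1 : p.2 ≤ b * p.2 := Nat.le_mul_of_pos_left _ hb
      omega

lemma T_mono {a b : ℕ} (ha : 0 < a) (hb : 0 < b) {m n : ℕ} (h : m ≤ n) :
    T a b m ⊆ T a b n := by
  intro p hp
  exact (mem_T ha hb).mpr (le_trans ((mem_T ha hb).mp hp) h)

lemma d3_eq {a b : ℕ} (ha : 0 < a) (hb : 0 < b) (n : ℕ) :
    d3 1 a b (n : ℤ) = (T a b n).card := by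
  have key : ∀ p : ℕ × ℕ × ℕ,
      (((1:ℕ) : ℤ) * p.1 + (a : ℤ) * p.2.1 + (b : ℤ) * p.2.2 = (n:ℤ)) ↔
      (p.1 + a * p.2.1 + b * p.2.2 = n) := by
    intro p
    push_cast
    norm_cast
    omega
  have e : {p : ℕ × ℕ × ℕ // p.1 + a * p.2.1 + b * p.2.2 = n} ≃ {q // q ∈ T a b n} :=
    { toFun := fun p => ⟨(p.1.2.1, p.1.2.2), (mem_T ha hb).mpr
        (show a * p.1.2.1 + b * p.1.2.2 ≤ n by have h := p.2; omega)⟩,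
      invFun := fun q => ⟨(n - (a * q.1.1 + b * q.1.2), q.1.1, q.1.2),
        show n - (a * q.1.1 + b * q.1.2) + a * q.1.1 + b * q.1.2 = n by
          have h := (mem_T ha hb).mp q.2
          omega⟩,
      left_inv := fun p => by
        obtain ⟨⟨x, y, z⟩, h⟩ := p
        have h' : x + a * y + b * z = n := h
        exact Subtype.ext (by simp only [Prod.mk.injEq]; exact ⟨by omega, trivial⟩),
      right_inv := fun q => by
        rcases q with ⟨⟨y, z⟩, h⟩
        rfl }
  rw [d3, Nat.card_congr (Equiv.subtypeEquivRight key), Nat.card_congr e,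
    Nat.card_eq_finsetCard]

lemma d3_neg {a b : ℕ} {n : ℤ} (hn : n < 0) : d3 1 a b n = 0 := by
  rw [d3]
  have : IsEmpty {p : ℕ × ℕ × ℕ // ((1:ℕ) : ℤ) * p.1 + (a : ℤ) * p.2.1 + (b : ℤ) * p.2.2 = n} := by
    constructor
    rintro ⟨⟨x, y, z⟩, h⟩
    simp only at h
    have h1 : (0:ℤ) ≤ ((1:ℕ):ℤ) * x := by positivity
    have h2 : (0:ℤ) ≤ (a:ℤ) * y := by positivity
    have h3 : (0:ℤ) ≤ (b:ℤ) * z := by positivity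
    linarith
  exact Nat.card_of_isEmpty

/-- fiberwise count of `T`. -/
lemma T_card {a b : ℕ} (ha : 0 < a) (hb : 0 < b) (n : ℕ) :
    (T a b n).card = ∑ z ∈ Finset.range (n+1),
      (if b * z ≤ n then (n - b * z) / a + 1 else 0) := by
  have hmap : ∀ p ∈ T a b n, p.2 ∈ Finset.range (n+1) := by
    intro p hp
    have h := (mem_T ha hb).mp hp
    have h1 : p.2 ≤ b * p.2 := Nat.le_mul_of_pos_left _ hb
    exact Finset.mem_range.mpr (by omega)
  rw [Finset.card_eq_sum_card_fiberwise hmap]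
  refine Finset.sum_congr rfl (fun z hz => ?_)
  by_cases hbz : b * z ≤ n
  · rw [if_pos hbz]
    rw [show (n - b * z) / a + 1 = (Finset.range ((n - b * z) / a + 1)).card by simp]
    refine Finset.card_bij' (fun (p : ℕ × ℕ) _ => p.1) (fun y _ => (y, z)) ?_ ?_ ?_ ?_
    · intro p hp
      obtain ⟨hp1, hp2⟩ := Finset.mem_filter.mp hp
      have h := (mem_T ha hb).mp hp1
      rw [hp2] at h
      have hc : p.1 * a = a * p.1 := mul_comm _ _
      rw [Finset.mem_range, Nat.lt_succ_iff, Nat.le_div_iff_mul_le ha]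
      omega
    · intro y hy
      rw [Finset.mem_range, Nat.lt_succ_iff, Nat.le_div_iff_mul_le ha] at hy
      have hc : y * a = a * y := mul_comm _ _
      refine Finset.mem_filter.mpr ⟨(mem_T ha hb).mpr (by dsimp only; omega), rfl⟩
    · intro p hp
      obtain ⟨hp1, hp2⟩ := Finset.mem_filter.mp hp
      subst hp2
      rfl
    · intro y hy
      rfl
  · rw [if_neg hbz]
    rw [Finset.card_eq_zero]
    refine Finset.filter_eq_empty_iff.mpr ?_
    intro p hp hp2
    have h := (mem_T ha hb).mp hp
    rw [hp2] at h
    omega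

/-- ceiling as nat division -/
lemma ceil_eq {a : ℕ} (ha : 0 < a) (m : ℕ) (hm : 0 < m) :
    (⌈(m : ℚ) / a⌉).toNat = (m - 1) / a + 1 := by
  have haQ : (0:ℚ) < a := by exact_mod_cast ha
  have h1 : ((((m - 1) / a : ℕ) : ℚ)) < (m : ℚ) / a := by
    rw [lt_div_iff₀ haQ]
    have h2 : (m - 1) / a * a ≤ m - 1 := Nat.div_mul_le_self _ _
    have h3 : ((m - 1) / a * a : ℕ) < m := by omega
    exact_mod_cast h3
  have h2 : (m : ℚ) / a ≤ (((m - 1) / a : ℕ) : ℚ) + 1 := by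
    rw [div_le_iff₀ haQ]
    have hdm := Nat.div_add_mod (m - 1) a
    have hml : (m - 1) % a < a := Nat.mod_lt _ ha
    have h3 : m ≤ (m - 1) / a * a + a := by
      have h5 : (m - 1) / a * a = a * ((m - 1) / a) := mul_comm _ _
      omega
    have hQ : (m : ℚ) ≤ (((m - 1) / a : ℕ) : ℚ) * a + a := by exact_mod_cast h3
    nlinarith [hQ]
  have hkey : ⌈(m : ℚ) / a⌉ = (((m - 1) / a + 1 : ℕ) : ℤ) := by
    rw [Int.ceil_eq_iff]
    rw [Int.cast_natCast, Nat.cast_add, Nat.cast_one]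
    exact ⟨by linarith [h1], by linarith [h2]⟩
  rw [hkey]
  exact Int.toNat_natCast _

/-- value of the target sum. -/
lemma sum_ceil {a b : ℕ} (ha : 0 < a) (hb : 0 < b) (s : ℕ) :
    ∑ j ∈ Finset.range (s + 1), (⌈(j * b : ℚ) / a⌉).toNat
      = ∑ j ∈ Finset.range s, (((j + 1) * b - 1) / a + 1) := by
  rw [Finset.sum_range_succ']
  have h0 : (⌈(((0:ℕ) : ℚ) * b) / a⌉).toNat = 0 := by
    norm_num
  rw [h0, add_zero]
  refine Finset.sum_congr rfl (fun j hj => ?_)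
  have hm : 0 < (j + 1) * b := Nat.mul_pos (Nat.succ_pos j) hb
  have hc : (((j + 1 : ℕ)) : ℚ) * b = (((j + 1) * b : ℕ) : ℚ) := by push_cast; ring
  rw [hc, ceil_eq ha ((j + 1) * b) hm]

/-- card of `T` at `s*b - 1` for `s ≥ 1`. -/
lemma T_card_pred {a b : ℕ} (ha : 0 < a) (hb : 0 < b) {s : ℕ} (hs : 0 < s) :
    (T a b (s * b - 1)).card = ∑ j ∈ Finset.range s, (((j + 1) * b - 1) / a + 1) := by
  have hsb : 1 ≤ s * b := Nat.mul_pos hs hb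
  have hss : s ≤ s * b := Nat.le_mul_of_pos_right s hb
  rw [T_card ha hb]
  rw [← Finset.sum_subset (Finset.range_subset_range.mpr (show s ≤ s * b - 1 + 1 by omega))
    (fun z hz hz2 => ?_)]
  · rw [← Finset.sum_range_reflect (fun j => (((j + 1) * b - 1) / a + 1)) s]
    refine Finset.sum_congr rfl (fun z hz => ?_)
    rw [Finset.mem_range] at hz
    have h1 : (s - z) * b = s * b - z * b := Nat.sub_mul s z b
    have h2 : z * b = b * z := mul_comm _ _
    have h3 : (z + 1) * b = z * b + b := by ring
    have h4 : (z + 1) * b ≤ s * b := Nat.mul_le_mul_right b (by omega : z + 1 ≤ s)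
    rw [if_pos (by omega), show s - 1 - z + 1 = s - z by omega,
      show s * b - 1 - b * z = (s - z) * b - 1 by omega]
  · rw [Finset.mem_range] at hz hz2
    have h4 : s * b ≤ z * b := Nat.mul_le_mul_right b (by omega)
    have h2 : z * b = b * z := mul_comm _ _
    rw [if_neg (by omega)]

lemma T_card_succ_ge {a b : ℕ} (ha : 0 < a) (hb : 0 < b) (s : ℕ) :
    (∑ j ∈ Finset.range (s + 1), (⌈(j * b : ℚ) / a⌉).toNat) + 1 ≤ (T a b (s * b)).card := by
  rcases Nat.eq_zero_or_pos s with rfl | hs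
  · have h0 : ∑ j ∈ Finset.range (0 + 1), (⌈(j * b : ℚ) / a⌉).toNat = 0 := by
      rw [sum_ceil ha hb]; simp
    rw [h0]
    refine Finset.card_pos.mpr ⟨(0, 0), (mem_T ha hb).mpr (by simp)⟩
  · have hsb : 1 ≤ s * b := Nat.mul_pos hs hb
    have h1 : T a b (s * b - 1) ⊆ T a b (s * b) := T_mono ha hb (Nat.sub_le _ _)
    have h2 : b * s = s * b := mul_comm _ _
    have h0 : ((0:ℕ), s) ∉ T a b (s * b - 1) := by
      intro hmem
      have := (mem_T ha hb).mp hmem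
      simp only [mul_zero, zero_add] at this
      omega
    have hmem : ((0:ℕ), s) ∈ T a b (s * b) := (mem_T ha hb).mpr (by
      simp only [mul_zero, zero_add]; omega)
    calc (∑ j ∈ Finset.range (s + 1), (⌈(j * b : ℚ) / a⌉).toNat) + 1
        = (T a b (s * b - 1)).card + 1 := by
          rw [sum_ceil ha hb, T_card_pred ha hb hs]
      _ = (insert ((0:ℕ), s) (T a b (s * b - 1))).card :=
          (Finset.card_insert_of_notMem h0).symm
      _ ≤ (T a b (s * b)).card := Finset.card_le_card (Finset.insert_subset hmem h1)

end Stmt18Aux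

open Stmt18Aux in
/-- `g(1, a, b; ∑_{j=0}^s ⌈jb/a⌉) = sb - 1`: the number `sb - 1` is the largest
integer having at most `∑_{j=0}^s ⌈jb/a⌉` representations as `x + ay + bz`
with `x, y, z` non-negative integers. -/
theorem stmt18 (a b : ℕ) (ha : 0 < a) (hb : 0 < b) (s : ℕ) :
    IsGreatest
      {n : ℤ | d3 1 a b n ≤ ∑ j ∈ Finset.range (s + 1), (⌈(j * b : ℚ) / a⌉).toNat}
      ((s : ℤ) * b - 1) := by
  constructor
  · simp only [Set.mem_setOf_eq]
    rcases Nat.eq_zero_or_pos s with rfl | hs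
    · have hneg : ((0:ℕ) : ℤ) * b - 1 < 0 := by norm_num
      rw [d3_neg hneg]
      exact Nat.zero_le _
    · have hsb : 1 ≤ s * b := Nat.mul_pos hs hb
      have hcast : (s : ℤ) * b - 1 = ((s * b - 1 : ℕ) : ℤ) := by
        rw [Nat.cast_sub hsb]; push_cast; ring
      rw [hcast, d3_eq ha hb, T_card_pred ha hb hs, ← sum_ceil ha hb]
  · intro n hn
    simp only [Set.mem_setOf_eq] at hn
    by_contra hlt
    push_neg at hlt
    have hge : ((s * b : ℕ) : ℤ) ≤ n := by push_cast; omega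
    have hn0 : 0 ≤ n := le_trans (Int.natCast_nonneg _) hge
    obtain ⟨m, rfl⟩ := Int.eq_ofNat_of_zero_le hn0
    rw [d3_eq ha hb] at hn
    have hm : s * b ≤ m := by exact_mod_cast hge
    have h1 := T_card_succ_ge ha hb s
    have h2 := Finset.card_le_card (T_mono ha hb hm)
    omega
end
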